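/- arXiv:1105.1074 — 2 statements merged into one kernel-verified Lean document; each statement's English description precedes it below -/
import Mathlib

section
/- Let W be a real symmetric m×m matrix satisfying 1ᵀW = 1ᵀ, W1 = 1 and ρ(W − 11ᵀ/m) < 1, let λ₂ := ρ(W − 11ᵀ/m) and let λ_min denote the smallest eigenvalue of W. Let n be a positive integer, z₀ ∈ ℝᵐ, and let (x_t)_{t≥0} be the nonnegative sequence defined by x₀ > 0, x₁ = ‖z₀‖_∞²·(1−λ_min)² + (2−λ_min)²·x₀/(3·2^{2n}), and for t ≥ 1, x_{t+1} = ‖z₀‖_∞²·λ₂^{2t}·(1−λ_min)² + (1−λ_min)²·Σ_{s=0}^{t−1} ‖Wˢ(W−I)‖²·x_{t−s−1}/(3·2^{2n}) + (2−λ_min)²·x_t/(3·2^{2n}). If (1−λ_min)⁴/(1−λ₂²) + (2−λ_min)² < 3·2^{2n}, then x_t → 0 as t → ∞ (equivalently, writing x_t = e^{−2β_t}, the quantization range size e^{−β_t} converges to zero). -/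
open Matrix Finset Filter

/-- The m×m averaging matrix `11ᵀ/m`. -/
noncomputable def avgMat (m : ℕ) : Matrix (Fin m) (Fin m) ℝ := Matrix.of fun _ _ => (1 : ℝ) / m

/-- The spectral (operator 2-)norm of a real square matrix. -/
noncomputable def spNorm {m : ℕ} (M : Matrix (Fin m) (Fin m) ℝ) : ℝ :=
  ‖Matrix.toEuclideanCLM (𝕜 := ℝ) M‖

/-- The supremum norm of a vector in `ℝᵐ`. -/
noncomputable def supNorm {m : ℕ} (v : Fin m → ℝ) : ℝ := ⨆ i, |v i|

/-!
An eigenvector of `W` for an eigenvalue `μ ≠ 1` is orthogonal to `1` (as `1ᵀW = 1ᵀ`), hence also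
an eigenvector of `W - 11ᵀ/m`, so `|μ| ≤ λ₂`. Diagonalising the symmetric `W` then bounds
`‖Wˢ(W - I)‖` by `max_μ |μˢ(μ - 1)| ≤ λ₂ˢ(1 - λ_min)`. With `q = λ₂²` the recurrence, of which
`x₁` is the `t = 0` instance, becomes `x_{t+1} ≤ A qᵗ + c ∑ₛ qˢ x_{t-s-1} + d x_t` with
`c / (1 - q) + d < 1`. Choosing `θ < 1` with `c / (θ - q) + d < θ`, strong induction gives
`x_t ≤ C θᵗ`.
-/

open Topology
open scoped Matrix.Norms.L2Operator

theorem Module.End.hasEigenvalue_sub_of_mul_eq {K V : Type*} [Field K] [AddCommGroup V]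
    [Module K V] {f p : Module.End K V} (hpf : p * f = p) {μ : K} (hμ : f.HasEigenvalue μ)
    (hμ1 : μ ≠ 1) : (f - p).HasEigenvalue μ := by
  obtain ⟨v, hv⟩ := hμ.exists_hasEigenvector
  have hpv : p v = 0 := by
    have h : μ • p v = p v := by
      rw [← map_smul, ← hv.apply_eq_smul, ← Module.End.mul_apply, hpf]
    have h' : (μ - 1) • p v = 0 := by rw [sub_smul, one_smul, h, sub_self]
    exact (smul_eq_zero.mp h').resolve_left (sub_ne_zero.mpr hμ1)
  refine Module.End.hasEigenvalue_of_hasEigenvector (x := v) ⟨?_, hv.2⟩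
  rw [Module.End.mem_genEigenspace_one, LinearMap.sub_apply, hpv, sub_zero, hv.apply_eq_smul]

theorem Matrix.mem_spectrum_sub_of_mul_eq {K n : Type*} [Field K] [Fintype n] [DecidableEq n]
    {A P : Matrix n n K} (hPA : P * A = P) {μ : K} (hμ : μ ∈ spectrum K A) (hμ1 : μ ≠ 1) :
    μ ∈ spectrum K (A - P) := by
  rw [← Matrix.spectrum_toLin', ← Module.End.hasEigenvalue_iff_mem_spectrum] at hμ ⊢
  have hPA' : toLin' P * toLin' A = toLin' P := by
    rw [Module.End.mul_eq_comp, ← toLin'_mul, hPA]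
  rw [map_sub]
  exact Module.End.hasEigenvalue_sub_of_mul_eq hPA' hμ hμ1

theorem spectrum.norm_le_toReal_spectralRadius {𝕜 A : Type*} [NormedField 𝕜] [Ring A] [Algebra 𝕜 A]
    {a : A} (ha : spectralRadius 𝕜 a ≠ ⊤) {k : 𝕜} (hk : k ∈ spectrum 𝕜 a) :
    ‖k‖ ≤ (spectralRadius 𝕜 a).toReal := by
  simpa using ENNReal.toReal_mono ha (le_iSup₂ (α := ENNReal) k hk)

theorem Matrix.IsHermitian.l2_opNorm_cfc_le {n 𝕜 : Type*} [RCLike 𝕜] [Fintype n] [DecidableEq n]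
    {A : Matrix n n 𝕜} (hA : A.IsHermitian) (f : ℝ → ℝ) {C : ℝ} (hC0 : 0 ≤ C)
    (hC : ∀ μ ∈ spectrum ℝ A, |f μ| ≤ C) : ‖cfc f A‖ ≤ C := by
  rw [hA.cfc_eq, IsHermitian.cfc, Unitary.conjStarAlgAut_apply, ← Unitary.coe_star,
    CStarRing.norm_mul_coe_unitary, CStarRing.norm_coe_unitary_mul, l2_opNorm_diagonal,
    pi_norm_le_iff_of_nonneg hC0]
  intro i
  simpa using hC _ (hA.eigenvalues_mem_spectrum_real i)

theorem abs_pow_mul_sub_one_le {μ r l : ℝ} (hμ : μ = 1 ∨ |μ| ≤ r) (hr0 : 0 ≤ r) (hr1 : r ≤ 1)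
    (hlμ : l ≤ μ) (s : ℕ) : |μ ^ s * (μ - 1)| ≤ r ^ s * (1 - l) := by
  rcases hμ with rfl | hμr
  · simp only [sub_self, mul_zero, abs_zero]
    exact mul_nonneg (pow_nonneg hr0 s) (by linarith)
  · have hμ1 : μ ≤ 1 := (le_abs_self μ).trans (hμr.trans hr1)
    rw [abs_mul, abs_pow, abs_sub_comm, abs_of_nonneg (sub_nonneg.2 hμ1)]
    gcongr

theorem Matrix.eq_one_or_abs_le_of_mem_spectrum {n : Type*} [Fintype n] [DecidableEq n]
    {A P : Matrix n n ℝ} (hPA : P * A = P) (hρ : spectralRadius ℝ (A - P) ≠ ⊤) {μ : ℝ}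
    (hμ : μ ∈ spectrum ℝ A) : μ = 1 ∨ |μ| ≤ (spectralRadius ℝ (A - P)).toReal :=
  or_iff_not_imp_left.2 fun hμ1 =>
    spectrum.norm_le_toReal_spectralRadius hρ (mem_spectrum_sub_of_mul_eq hPA hμ hμ1)

theorem Matrix.IsHermitian.l2_opNorm_pow_mul_sub_one_le {n : Type*} [Fintype n] [DecidableEq n]
    {A P : Matrix n n ℝ} (hA : A.IsHermitian) (hPA : P * A = P)
    (hρ : spectralRadius ℝ (A - P) ≤ 1) {l : ℝ} (hl : IsLeast (spectrum ℝ A) l) (s : ℕ) : ‖A ^ s * (A - 1)‖ ≤ (spectralRadius ℝ (A - P)).toReal ^ s * (1 - l) := by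
  have hρ_top : spectralRadius ℝ (A - P) ≠ ⊤ := ne_top_of_le_ne_top ENNReal.one_ne_top hρ
  have hr0 : 0 ≤ (spectralRadius ℝ (A - P)).toReal := ENNReal.toReal_nonneg
  have hr1 : (spectralRadius ℝ (A - P)).toReal ≤ 1 :=
    ENNReal.toReal_le_of_le_ofReal zero_le_one (by simpa using hρ)
  have hl1 : l ≤ 1 := by
    rcases eq_one_or_abs_le_of_mem_spectrum hPA hρ_top hl.1 with h | h
    · exact h.le
    · linarith [le_abs_self l]
  have hA' : IsSelfAdjoint A := hA
  have hcfc : A ^ s * (A - 1) = cfc (fun μ : ℝ => μ ^ s * (μ - 1)) A := by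
    rw [cfc_mul .., cfc_pow .., cfc_sub .., cfc_id' .., cfc_const_one ..]
  rw [hcfc]
  exact hA.l2_opNorm_cfc_le _ (mul_nonneg (pow_nonneg hr0 s) (sub_nonneg.2 hl1)) fun μ hμ =>
    abs_pow_mul_sub_one_le (eq_one_or_abs_le_of_mem_spectrum hPA hρ_top hμ) hr0 hr1 (hl.2 hμ) s

theorem avgMat_mul_of_vecMul_one {m : ℕ} {W : Matrix (Fin m) (Fin m) ℝ}
    (hW : vecMul (fun _ => (1 : ℝ)) W = fun _ => 1) : avgMat m * W = avgMat m := by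
  ext i j
  have hj : ∑ k, W k j = 1 := by simpa [vecMul, dotProduct] using congrFun hW j
  simp only [avgMat, mul_apply, of_apply, ← mul_sum, hj, mul_one]

theorem geom_sum₂_le_pow_div_sub {q θ : ℝ} (hq : 0 ≤ q) (hqθ : q < θ) (t : ℕ) :
    ∑ s ∈ range t, q ^ s * θ ^ (t - s - 1) ≤ θ ^ t / (θ - q) := by
  have h := geom_sum₂_mul q θ t
  simp_rw [Nat.sub_right_comm t 1] at h
  rw [le_div_iff₀ (sub_pos.2 hqθ)]
  linarith [pow_nonneg hq t]

theorem exists_mem_Ioo_div_sub_add_lt {q c d : ℝ} (hq1 : q < 1) (h : c / (1 - q) + d < 1) :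
    ∃ θ ∈ Set.Ioo q 1, c / (θ - q) + d < θ := by
  have hcont : ContinuousAt (fun θ : ℝ => c / (θ - q) + d - θ) 1 := by
    have : (1 : ℝ) - q ≠ 0 := by linarith
    fun_prop (disch := assumption)
  have hneg : ∀ᶠ θ in 𝓝[<] 1, c / (θ - q) + d - θ < 0 :=
    nhdsWithin_le_nhds (hcont.eventually_lt_const (by simpa using h))
  have hIoo : ∀ᶠ θ in 𝓝[<] (1 : ℝ), θ ∈ Set.Ioo q 1 := Ioo_mem_nhdsLT hq1
  obtain ⟨θ, hθ, hθ'⟩ := (hIoo.and hneg).exists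
  exact ⟨θ, hθ, by linarith⟩

section ConvolutionRecurrence

variable {x : ℕ → ℝ} {A q c d : ℝ}

theorem exists_le_mul_pow_of_le_convolution {θ : ℝ} (hA : 0 ≤ A) (hq : 0 ≤ q) (hc : 0 ≤ c)
    (hd : 0 ≤ d) (hqθ : q < θ) (hθ : c / (θ - q) + d < θ)
    (hrec : ∀ t, x (t + 1) ≤ A * q ^ t + c * ∑ s ∈ range t, q ^ s * x (t - s - 1) + d * x t) :
    ∃ C, ∀ t, x t ≤ C * θ ^ t := by
  set g := c / (θ - q) + d
  refine ⟨max (x 0) (A / (θ - g)), fun t => ?_⟩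
  set C := max (x 0) (A / (θ - g))
  have hAC : A ≤ C * (θ - g) := (div_le_iff₀ (sub_pos.2 hθ)).1 (le_max_right _ _)
  have hC : 0 ≤ C := (div_nonneg hA (sub_pos.2 hθ).le).trans (le_max_right _ _)
  have hθ0 : 0 ≤ θ := hq.trans hqθ.le
  induction t using Nat.strong_induction_on with
  | _ t ih =>
    rcases t with _ | t
    · rw [pow_zero, mul_one]; exact le_max_left _ _
    have hsum : ∑ s ∈ range t, q ^ s * x (t - s - 1) ≤ C * (θ ^ t / (θ - q)) := by
      calc ∑ s ∈ range t, q ^ s * x (t - s - 1)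
          ≤ ∑ s ∈ range t, q ^ s * (C * θ ^ (t - s - 1)) := by
            gcongr with s
            exact ih _ (by omega)
        _ = C * ∑ s ∈ range t, q ^ s * θ ^ (t - s - 1) := by
            rw [mul_sum]; exact sum_congr rfl fun s _ => by ring
        _ ≤ C * (θ ^ t / (θ - q)) := by gcongr; exact geom_sum₂_le_pow_div_sub hq hqθ t
    have hq_pow : q ^ t ≤ θ ^ t := by gcongr
    calc x (t + 1) ≤ A * q ^ t + c * ∑ s ∈ range t, q ^ s * x (t - s - 1) + d * x t := hrec t
      _ ≤ A * θ ^ t + c * (C * (θ ^ t / (θ - q))) + d * (C * θ ^ t) := by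
          gcongr; exact ih t (by omega)
      _ = (A + C * g) * θ ^ t := by ring
      _ ≤ (C * θ) * θ ^ t := by gcongr; linarith
      _ = C * θ ^ (t + 1) := by ring

theorem nonneg_of_eq_convolution {a k : ℕ → ℝ} (hx0 : 0 ≤ x 0) (ha : ∀ t, 0 ≤ a t)
    (hk : ∀ s, 0 ≤ k s) (hd : 0 ≤ d)
    (hrec : ∀ t, x (t + 1) = a t + ∑ s ∈ range t, k s * x (t - s - 1) + d * x t) (t : ℕ) :
    0 ≤ x t := by
  induction t using Nat.strong_induction_on with
  | _ t ih =>
    rcases t with _ | t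
    · exact hx0
    rw [hrec]
    have hsum : 0 ≤ ∑ s ∈ range t, k s * x (t - s - 1) :=
      sum_nonneg fun s _ => mul_nonneg (hk s) (ih _ (by omega))
    have := ih t (by omega)
    have := ha t
    positivity

theorem tendsto_zero_of_eq_convolution {k : ℕ → ℝ} (hx0 : 0 ≤ x 0) (hA : 0 ≤ A) (hq : 0 ≤ q)
    (hq1 : q < 1) (hd : 0 ≤ d) (hk0 : ∀ s, 0 ≤ k s) (hkc : ∀ s, k s ≤ c * q ^ s)
    (hrec : ∀ t, x (t + 1) = A * q ^ t + ∑ s ∈ range t, k s * x (t - s - 1) + d * x t)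
    (h : c / (1 - q) + d < 1) : Tendsto x atTop (𝓝 0) := by
  have hc : 0 ≤ c := by simpa using (hk0 0).trans (hkc 0)
  have hx : ∀ t, 0 ≤ x t :=
    nonneg_of_eq_convolution hx0 (fun t => by positivity) hk0 hd hrec
  have hrec_le (t : ℕ) :
      x (t + 1) ≤ A * q ^ t + c * ∑ s ∈ range t, q ^ s * x (t - s - 1) + d * x t := by
    have hsum : ∑ s ∈ range t, k s * x (t - s - 1) ≤
        c * ∑ s ∈ range t, q ^ s * x (t - s - 1) := by
      rw [mul_sum]
      refine sum_le_sum fun s _ => ?_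
      rw [← mul_assoc]
      exact mul_le_mul_of_nonneg_right (hkc s) (hx _)
    linarith [hrec t]
  obtain ⟨θ, ⟨hqθ, hθ1⟩, hθ⟩ := exists_mem_Ioo_div_sub_add_lt hq1 h
  obtain ⟨C, hC⟩ := exists_le_mul_pow_of_le_convolution hA hq hc hd hqθ hθ hrec_le
  have hθC : Tendsto (fun t => C * θ ^ t) atTop (𝓝 0) := by
    simpa using (tendsto_pow_atTop_nhds_zero_of_lt_one (hq.trans hqθ.le) hθ1).const_mul C
  exact squeeze_zero hx hC hθC

end ConvolutionRecurrence

theorem prop3_quantization_range_tendsto_zero_general {m : ℕ}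
    (W : Matrix (Fin m) (Fin m) ℝ) (hsym : W.IsSymm)
    (hcol : Matrix.vecMul (fun _ => (1 : ℝ)) W = fun _ => 1)
    (hρ : spectralRadius ℝ (W - avgMat m) < 1)
    (lam2 : ℝ) (hlam2 : lam2 = (spectralRadius ℝ (W - avgMat m)).toReal)
    (lammin : ℝ) (hmem : lammin ∈ spectrum ℝ W)
    (hmin : ∀ μ ∈ spectrum ℝ W, lammin ≤ μ)
    (n : ℕ) (z₀ : Fin m → ℝ)
    (x : ℕ → ℝ) (hx0 : 0 < x 0)
    (hx1 : x 1 = supNorm z₀ ^ 2 * (1 - lammin) ^ 2 + (2 - lammin) ^ 2 * x 0 / (3 * 2 ^ (2 * n)))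
    (hxrec : ∀ t, 1 ≤ t →
      x (t + 1) = supNorm z₀ ^ 2 * lam2 ^ (2 * t) * (1 - lammin) ^ 2 +
        (1 - lammin) ^ 2 *
          ∑ s ∈ Finset.range t, spNorm (W ^ s * (W - 1)) ^ 2 * x (t - s - 1) / (3 * 2 ^ (2 * n)) +
        (2 - lammin) ^ 2 * x t / (3 * 2 ^ (2 * n)))
    (hcond : (1 - lammin) ^ 4 / (1 - lam2 ^ 2) + (2 - lammin) ^ 2 < 3 * 2 ^ (2 * n)) :
    Tendsto x atTop (nhds 0) := by
  have hW : W.IsHermitian := isHermitian_iff_isSymm.2 hsym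
  have hPW : avgMat m * W = avgMat m := avgMat_mul_of_vecMul_one hcol
  have hlam2_nonneg : 0 ≤ lam2 := hlam2 ▸ ENNReal.toReal_nonneg
  have hlam2_lt_one : lam2 < 1 := hlam2 ▸ ENNReal.toReal_lt_of_lt_ofReal (by simpa using hρ)
  have hnorm (s : ℕ) : spNorm (W ^ s * (W - 1)) ≤ lam2 ^ s * (1 - lammin) :=
    hlam2 ▸ hW.l2_opNorm_pow_mul_sub_one_le hPW hρ.le ⟨hmem, hmin⟩ s
  set K : ℝ := 3 * 2 ^ (2 * n)
  have hK : 0 < K := by positivity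
  refine tendsto_zero_of_eq_convolution (A := supNorm z₀ ^ 2 * (1 - lammin) ^ 2) (q := lam2 ^ 2)
    (c := (1 - lammin) ^ 4 / K) (d := (2 - lammin) ^ 2 / K)
    (k := fun s => (1 - lammin) ^ 2 * spNorm (W ^ s * (W - 1)) ^ 2 / K)
    hx0.le (by positivity) (by positivity) (pow_lt_one₀ hlam2_nonneg hlam2_lt_one two_ne_zero)
    (by positivity) (fun s => by positivity) (fun s => ?_) (fun t => ?_) ?_
  · calc (1 - lammin) ^ 2 * spNorm (W ^ s * (W - 1)) ^ 2 / K
        ≤ (1 - lammin) ^ 2 * (lam2 ^ s * (1 - lammin)) ^ 2 / K := by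
          gcongr
          exacts [norm_nonneg _, hnorm s]
      _ = (1 - lammin) ^ 4 / K * (lam2 ^ 2) ^ s := by ring
  · rcases Nat.eq_zero_or_pos t with rfl | ht
    · simp only [hx1, pow_zero, range_zero, sum_empty]
      ring
    · have hsum :
          (1 - lammin) ^ 2 * ∑ s ∈ range t, spNorm (W ^ s * (W - 1)) ^ 2 * x (t - s - 1) / K =
            ∑ s ∈ range t, (1 - lammin) ^ 2 * spNorm (W ^ s * (W - 1)) ^ 2 / K * x (t - s - 1) := by
        rw [mul_sum]
        exact sum_congr rfl fun s _ => by ring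
      rw [hxrec t ht, hsum, pow_mul]
      ring
  · rwa [div_right_comm, ← add_div, div_lt_one hK]

/-- **Proposition 3.** Let `W` be a real symmetric `m×m` matrix with `1ᵀW = 1ᵀ`,
`W1 = 1`, `ρ(W − 11ᵀ/m) < 1`; `λ₂ := ρ(W − 11ᵀ/m)`, `λ_min` the smallest eigenvalue of `W`.
Let `(x_t)` be the sequence with `x₀ > 0`,
`x₁ = ‖z₀‖_∞²(1−λ_min)² + (2−λ_min)²·x₀/(3·2^{2n})`, and for `t ≥ 1`,
`x_{t+1} = ‖z₀‖_∞²·λ₂^{2t}·(1−λ_min)² + (1−λ_min)²·Σ_{s=0}^{t−1}‖Wˢ(W−I)‖²·x_{t−s−1}/(3·2^{2n})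
 + (2−λ_min)²·x_t/(3·2^{2n})`.
If `(1−λ_min)⁴/(1−λ₂²) + (2−λ_min)² < 3·2^{2n}` then `x_t → 0`. -/
theorem prop3_quantization_range_tendsto_zero {m : ℕ}
    (W : Matrix (Fin m) (Fin m) ℝ) (hsym : W.IsSymm)
    (hcol : Matrix.vecMul (fun _ => (1 : ℝ)) W = fun _ => 1)
    (hrow : W.mulVec (fun _ => (1 : ℝ)) = fun _ => 1)
    (hρ : spectralRadius ℝ (W - avgMat m) < 1)
    (lam2 : ℝ) (hlam2 : lam2 = (spectralRadius ℝ (W - avgMat m)).toReal)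
    (lammin : ℝ) (hmem : lammin ∈ spectrum ℝ W)
    (hmin : ∀ μ ∈ spectrum ℝ W, lammin ≤ μ)
    (n : ℕ) (hn : 0 < n) (z₀ : Fin m → ℝ)
    (x : ℕ → ℝ) (hx0 : 0 < x 0)
    (hx1 : x 1 = supNorm z₀ ^ 2 * (1 - lammin) ^ 2 + (2 - lammin) ^ 2 * x 0 / (3 * 2 ^ (2 * n)))
    (hxrec : ∀ t, 1 ≤ t →
      x (t + 1) = supNorm z₀ ^ 2 * lam2 ^ (2 * t) * (1 - lammin) ^ 2 +
        (1 - lammin) ^ 2 *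
          ∑ s ∈ Finset.range t, spNorm (W ^ s * (W - 1)) ^ 2 * x (t - s - 1) / (3 * 2 ^ (2 * n)) +
        (2 - lammin) ^ 2 * x t / (3 * 2 ^ (2 * n)))
    (hcond : (1 - lammin) ^ 4 / (1 - lam2 ^ 2) + (2 - lammin) ^ 2 < 3 * 2 ^ (2 * n)) :
    Tendsto x atTop (nhds 0) :=
  prop3_quantization_range_tendsto_zero_general W hsym hcol hρ lam2 hlam2 lammin hmem hmin n z₀ x
    hx0 hx1 hxrec hcond
end

section
/- Let W be a real symmetric m×m matrix satisfying 1ᵀW = 1ᵀ and W1 = 1, and let z_{t+1} = Wz_t for all t ≥ 0 (the unquantized consensus iteration). Then for all t ≥ 0, ‖z_{t+1} − z_t‖/√m ≤ ‖W − 11ᵀ/m‖ᵗ · ‖W − I‖ · ‖z₀‖_∞, where the matrix norms are spectral (operator 2-)norms, ‖·‖ is the Euclidean norm and ‖·‖_∞ the supremum norm. -/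
/-!
Since `1ᵀW = 1ᵀ`, the iteration preserves the coordinate sum, so every difference
`d_t = z_{t+1} − z_t` has coordinate sum zero and is annihilated by `11ᵀ/m`; hence
`d_{t+1} = W d_t = (W − 11ᵀ/m) d_t`. Iterating the operator-norm bound from `d_0 = (W − I) z_0`
and using `‖z_0‖ ≤ √m ‖z_0‖_∞` gives the estimate.
-/

open Matrix Finset

/-- The Euclidean norm of a vector in `ℝᵐ`. -/
noncomputable def eucNorm {m : ℕ} (v : Fin m → ℝ) : ℝ := Real.sqrt (∑ i, v i ^ 2)

lemma spNorm_nonneg {m : ℕ} (M : Matrix (Fin m) (Fin m) ℝ) : 0 ≤ spNorm M :=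
  norm_nonneg _

lemma eucNorm_eq_norm_toLp {m : ℕ} (v : Fin m → ℝ) : eucNorm v = ‖WithLp.toLp 2 v‖ := by
  simp [eucNorm, EuclideanSpace.norm_eq]

lemma eucNorm_mulVec_le {m : ℕ} (M : Matrix (Fin m) (Fin m) ℝ) (v : Fin m → ℝ) :
    eucNorm (M *ᵥ v) ≤ spNorm M * eucNorm v := by
  rw [eucNorm_eq_norm_toLp, eucNorm_eq_norm_toLp, spNorm, ← toEuclideanCLM_toLp]
  exact (toEuclideanCLM (𝕜 := ℝ) M).le_opNorm _

lemma abs_le_supNorm {m : ℕ} (v : Fin m → ℝ) (i : Fin m) : |v i| ≤ supNorm v :=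
  le_ciSup (Set.finite_range fun j => |v j|).bddAbove i

lemma supNorm_nonneg {m : ℕ} (v : Fin m → ℝ) : 0 ≤ supNorm v :=
  Real.iSup_nonneg fun i => abs_nonneg (v i)

lemma eucNorm_le_sqrt_mul_supNorm {m : ℕ} (v : Fin m → ℝ) :
    eucNorm v ≤ Real.sqrt m * supNorm v := by
  calc eucNorm v ≤ Real.sqrt (∑ _i : Fin m, supNorm v ^ 2) := by
        refine Real.sqrt_le_sqrt (sum_le_sum fun i _ => ?_)
        rw [← sq_abs]
        gcongr
        exact abs_le_supNorm v i
    _ = Real.sqrt m * supNorm v := by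
        rw [sum_const, card_univ, Fintype.card_fin, nsmul_eq_mul,
          Real.sqrt_mul (Nat.cast_nonneg m), Real.sqrt_sq (supNorm_nonneg v)]

lemma sum_mulVec_of_vecMul_one {n R : Type*} [Fintype n] [Semiring R] {W : Matrix n n R}
    (hcol : vecMul (fun _ => (1 : R)) W = fun _ => 1) (x : n → R) :
    ∑ i, (W *ᵥ x) i = ∑ i, x i := by
  calc ∑ i, (W *ᵥ x) i = 1 ⬝ᵥ (W *ᵥ x) := (one_dotProduct _).symm
    _ = (1 ᵥ* W) ⬝ᵥ x := dotProduct_mulVec _ _ _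
    _ = ∑ i, x i := by rw [show 1 ᵥ* W = 1 from hcol, one_dotProduct]

lemma avgMat_mulVec {m : ℕ} (x : Fin m → ℝ) : avgMat m *ᵥ x = fun _ => (∑ i, x i) / m := by
  ext
  simp [avgMat, mulVec, dotProduct, ← mul_sum, div_eq_inv_mul]

lemma mulVec_eq_sub_avgMat_mulVec_of_sum_eq_zero {m : ℕ} (W : Matrix (Fin m) (Fin m) ℝ)
    {x : Fin m → ℝ} (hx : ∑ i, x i = 0) : W *ᵥ x = (W - avgMat m) *ᵥ x := by
  rw [sub_mulVec, avgMat_mulVec, hx, zero_div, ← Pi.zero_def, sub_zero]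

section ConsensusIteration

variable {m : ℕ} {W : Matrix (Fin m) (Fin m) ℝ}
  (hcol : vecMul (fun _ => (1 : ℝ)) W = fun _ => 1)
  {z : ℕ → Fin m → ℝ} (hiter : ∀ t, z (t + 1) = W *ᵥ z t)
include hcol hiter

lemma sum_succ_sub_eq_zero (t : ℕ) : ∑ i, (z (t + 1) - z t) i = 0 := by
  simp only [Pi.sub_apply, sum_sub_distrib, hiter t, sum_mulVec_of_vecMul_one hcol, sub_self]

lemma succ_succ_sub_eq_mulVec (t : ℕ) :
    z (t + 2) - z (t + 1) = (W - avgMat m) *ᵥ (z (t + 1) - z t) := by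
  rw [← mulVec_eq_sub_avgMat_mulVec_of_sum_eq_zero W (sum_succ_sub_eq_zero hcol hiter t),
    mulVec_sub, ← hiter, ← hiter]

lemma eucNorm_succ_sub_le (t : ℕ) :
    eucNorm (z (t + 1) - z t) ≤ spNorm (W - avgMat m) ^ t * eucNorm (z 1 - z 0) :=
  le_geom (u := fun t => eucNorm (z (t + 1) - z t)) (spNorm_nonneg _) t fun k _ => by
    simpa only [succ_succ_sub_eq_mulVec hcol hiter k] using eucNorm_mulVec_le _ _

end ConsensusIteration

theorem unquantized_successive_difference_decay_general {m : ℕ} (W : Matrix (Fin m) (Fin m) ℝ)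
    (hcol : Matrix.vecMul (fun _ => (1 : ℝ)) W = fun _ => 1)
    (z : ℕ → Fin m → ℝ) (hiter : ∀ t, z (t + 1) = W.mulVec (z t)) :
    ∀ t, eucNorm (z (t + 1) - z t) / Real.sqrt m ≤
      spNorm (W - avgMat m) ^ t * spNorm (W - 1) * supNorm (z 0) := by
  intro t
  have hd₀ : z 1 - z 0 = (W - 1) *ᵥ z 0 := by rw [hiter, sub_mulVec, one_mulVec]
  have hJ := spNorm_nonneg (W - avgMat m)
  have hI := spNorm_nonneg (W - 1)
  refine div_le_of_le_mul₀ (Real.sqrt_nonneg _)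
    (mul_nonneg (mul_nonneg (pow_nonneg hJ t) hI) (supNorm_nonneg _)) ?_
  calc eucNorm (z (t + 1) - z t)
      ≤ spNorm (W - avgMat m) ^ t * eucNorm (z 1 - z 0) := eucNorm_succ_sub_le hcol hiter t
    _ ≤ spNorm (W - avgMat m) ^ t * (spNorm (W - 1) * (Real.sqrt m * supNorm (z 0))) := by
        rw [hd₀]
        gcongr
        exact (eucNorm_mulVec_le _ _).trans (by gcongr; exact eucNorm_le_sqrt_mul_supNorm _)
    _ = spNorm (W - avgMat m) ^ t * spNorm (W - 1) * supNorm (z 0) * Real.sqrt m := by ring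

/-- For a real symmetric `m×m` matrix `W` with `1ᵀW = 1ᵀ`, `W1 = 1`, and the
unquantized consensus iteration `z_{t+1} = Wz_t`, for all `t ≥ 0`:
`‖z_{t+1} − z_t‖/√m ≤ ‖W − 11ᵀ/m‖ᵗ · ‖W − I‖ · ‖z₀‖_∞`. -/
theorem unquantized_successive_difference_decay {m : ℕ} (W : Matrix (Fin m) (Fin m) ℝ)
    (hsym : W.IsSymm)
    (hcol : Matrix.vecMul (fun _ => (1 : ℝ)) W = fun _ => 1)
    (hrow : W.mulVec (fun _ => (1 : ℝ)) = fun _ => 1)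
    (z : ℕ → Fin m → ℝ) (hiter : ∀ t, z (t + 1) = W.mulVec (z t)) :
    ∀ t, eucNorm (z (t + 1) - z t) / Real.sqrt m ≤
      spNorm (W - avgMat m) ^ t * spNorm (W - 1) * supNorm (z 0) :=
  unquantized_successive_difference_decay_general W hcol z hiter
end
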